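/- Let 0 < λ < 1, l > 0, a > 0, and let C be the closed trapezoid with vertices (0,0), (l,0), (0,a), (λl, a). For any u that is C^1 on a neighborhood of C, |(1/λ)∫_0^{λl} u(x,a) dx − ∫_0^l u(x,0) dx| ≤ (√(2 + l²/a²)/λ²) ∫_C |∇u| dx dy. -/

import Mathlib

/-!
Pull the trapezoid back to the rectangle `[0, l] × [0, a]` by the shear
`G(α, β) = ((1 - cβ)α, β)`, `c = (1 - λ)/a`. For fixed `α`, `β ↦ G(α, β)` runs along a segment
from `(α, 0)` to `(λα, a)` with constant velocity `(-cα, 1)`, of length at most `√(2 + l²/a²)`, so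
the fundamental theorem of calculus bounds `|u(λα, a) - u(α, 0)|` by that length times the
integral of `|∇u ∘ G|` over `β ∈ [0, a]`. After the substitution `x = λα` on the top side,
integrating in `α` bounds the left-hand side by `√(2 + l²/a²) ∫_{[0,l]×[0,a]} |∇u ∘ G|`.
The Jacobian `1 - cβ` of `G` is at least `λ`, so the change of variables formula bounds this
integral by `λ⁻¹ ∫_C |∇u|`, and `λ⁻¹ ≤ λ⁻²`.
-/

open Set MeasureTheory Real

noncomputable section

/-- A point of the Euclidean plane given by its two coordinates. -/
def pt (x y : ℝ) : EuclideanSpace ℝ (Fin 2) := (WithLp.equiv 2 (Fin 2 → ℝ)).symm ![x, y]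

lemma pt_add (x y x' y' : ℝ) : pt x y + pt x' y' = pt (x + x') (y + y') := by
  ext i; fin_cases i <;> simp [pt]

lemma pt_smul (r x y : ℝ) : r • pt x y = pt (r * x) (r * y) := by
  ext i; fin_cases i <;> simp [pt]

lemma norm_pt (x y : ℝ) : ‖pt x y‖ = √(x ^ 2 + y ^ 2) := by
  simp [pt, EuclideanSpace.norm_eq, Fin.sum_univ_two, sq_abs]

/- Fubini and the change of variables formula are applied on `ℝ × ℝ`; `ptEquiv` transports them
to the Euclidean plane, whose norm is the one in `|∇u|`. -/
def ptEquiv : ℝ × ℝ ≃ᵐ EuclideanSpace ℝ (Fin 2) :=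
  MeasurableEquiv.finTwoArrow.symm.trans (MeasurableEquiv.toLp 2 (Fin 2 → ℝ))

@[simp]
lemma ptEquiv_apply (p : ℝ × ℝ) : ptEquiv p = pt p.1 p.2 := by
  simp [ptEquiv, pt, MeasurableEquiv.finTwoArrow, MeasurableEquiv.toLp]
  rfl

@[fun_prop]
lemma continuous_ptEquiv : Continuous ptEquiv := by
  simp only [funext ptEquiv_apply, pt, WithLp.equiv_symm_apply]
  exact (PiLp.continuous_toLp 2 _).comp
    (continuous_pi fun i => by fin_cases i <;> simp <;> fun_prop)

lemma measurePreserving_ptEquiv : MeasurePreserving ptEquiv volume volume :=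
  ((EuclideanSpace.volume_preserving_symm_measurableEquiv_toLp (Fin 2)).symm _).comp
    ((volume_preserving_finTwoArrow ℝ).symm _)

theorem norm_sub_le_integral_norm_fderiv_segment {E F : Type*} [NormedAddCommGroup E]
    [NormedSpace ℝ E] [NormedAddCommGroup F] [NormedSpace ℝ F] [CompleteSpace F]
    {u : E → F} {U : Set E} (hU : IsOpen U) (hu : ContDiffOn ℝ 1 u U) {x w : E} {a : ℝ}
    (ha : 0 ≤ a) (hxw : ∀ t ∈ Icc 0 a, x + t • w ∈ U) :
    ‖u (x + a • w) - u x‖ ≤ ‖w‖ * ∫ t in 0..a, ‖fderiv ℝ u (x + t • w)‖ := by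
  have hxw' : ∀ t ∈ uIcc 0 a, x + t • w ∈ U := by rwa [uIcc_of_le ha]
  have hDu : ContinuousOn (fun t : ℝ => fderiv ℝ u (x + t • w)) (uIcc 0 a) :=
    (hu.continuousOn_fderiv_of_isOpen hU le_rfl).comp (by fun_prop) hxw'
  have hDuw : ContinuousOn (fun t : ℝ => fderiv ℝ u (x + t • w) w) (uIcc 0 a) :=
    (ContinuousLinearMap.apply ℝ F w).continuous.comp_continuousOn hDu
  have hFTC : u (x + a • w) - u x = ∫ t in 0..a, fderiv ℝ u (x + t • w) w := by
    have hderiv : ∀ t ∈ uIcc 0 a,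
        HasDerivAt (fun t : ℝ => u (x + t • w)) (fderiv ℝ u (x + t • w) w) t := fun t ht =>
      ((hu.differentiableOn one_ne_zero).differentiableAt
        (hU.mem_nhds (hxw' t ht))).hasFDerivAt.comp_hasDerivAt t
        (by simpa using ((hasDerivAt_id t).smul_const w).const_add x)
    rw [intervalIntegral.integral_eq_sub_of_hasDerivAt hderiv hDuw.intervalIntegrable]
    simp
  calc ‖u (x + a • w) - u x‖
      ≤ ∫ t in 0..a, ‖fderiv ℝ u (x + t • w) w‖ := by
        rw [hFTC]; exact intervalIntegral.norm_integral_le_integral_norm ha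
    _ ≤ ∫ t in 0..a, ‖fderiv ℝ u (x + t • w)‖ * ‖w‖ :=
        intervalIntegral.integral_mono_on ha hDuw.norm.intervalIntegrable
          (hDu.norm.mul continuousOn_const).intervalIntegrable
          fun t _ => ContinuousLinearMap.le_opNorm _ _
    _ = ‖w‖ * ∫ t in 0..a, ‖fderiv ℝ u (x + t • w)‖ := by
        rw [intervalIntegral.integral_mul_const, mul_comm]

theorem abs_inv_mul_integral_sub_integral_le {f g : ℝ → ℝ} {lam l : ℝ} (hlam : 0 < lam)
    (hl : 0 ≤ l) (hf : ContinuousOn (fun α => f (lam * α)) (Icc 0 l))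
    (hg : ContinuousOn g (Icc 0 l)) :
    |(1 / lam) * (∫ x in (0 : ℝ)..(lam * l), f x) - ∫ x in (0 : ℝ)..l, g x| ≤
      ∫ α in Icc 0 l, |f (lam * α) - g α| := by
  have hrescale := intervalIntegral.integral_comp_mul_left f hlam.ne' (a := 0) (b := l)
  rw [mul_zero] at hrescale
  rw [one_div, ← smul_eq_mul, ← hrescale, ← intervalIntegral.integral_sub
    (hf.intervalIntegrable_of_Icc hl) (hg.intervalIntegrable_of_Icc hl),
    intervalIntegral.integral_of_le hl, ← integral_Icc_eq_integral_Ioc]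
  exact abs_integral_le_integral_abs

theorem bilinear_mem_convexHull {E : Type*} [AddCommGroup E] [Module ℝ E] (p q r w : E)
    {s t : ℝ} (hs : s ∈ Icc (0 : ℝ) 1) (ht : t ∈ Icc (0 : ℝ) 1) :
    (1 - t) • ((1 - s) • p + s • q) + t • ((1 - s) • r + s • w) ∈ convexHull ℝ {p, q, r, w} := by
  have hK := convex_convexHull ℝ ({p, q, r, w} : Set E)
  have hmem : ∀ x ∈ ({p, q, r, w} : Set E), x ∈ convexHull ℝ {p, q, r, w} :=
    fun x hx => subset_convexHull ℝ _ hx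
  refine hK (hK (hmem p (by simp)) (hmem q (by simp)) ?_ hs.1 (by ring))
    (hK (hmem r (by simp)) (hmem w (by simp)) ?_ hs.1 (by ring)) ?_ ht.1 (by ring) <;>
    linarith [hs.2, ht.2]

-- The map `G` of the paper is `ptEquiv ∘ shear ((1 - λ) / a)`.
def shear (c : ℝ) (p : ℝ × ℝ) : ℝ × ℝ := ((1 - c * p.2) * p.1, p.2)

def shearDeriv (c : ℝ) (p : ℝ × ℝ) : ℝ × ℝ →L[ℝ] ℝ × ℝ :=
  ((1 - c * p.2) • ContinuousLinearMap.fst ℝ ℝ ℝ - (c * p.1) • ContinuousLinearMap.snd ℝ ℝ ℝ).prod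
    (ContinuousLinearMap.snd ℝ ℝ ℝ)

@[fun_prop]
lemma continuous_shear (c : ℝ) : Continuous (shear c) := by
  unfold shear; fun_prop

lemma hasFDerivAt_shear (c : ℝ) (p : ℝ × ℝ) : HasFDerivAt (shear c) (shearDeriv c p) p := by
  have hfst : HasFDerivAt (fun q : ℝ × ℝ => (1 - c * q.2) * q.1)
      ((1 - c * p.2) • ContinuousLinearMap.fst ℝ ℝ ℝ
        + p.1 • -(c • ContinuousLinearMap.snd ℝ ℝ ℝ)) p :=
    ((hasFDerivAt_snd.const_mul c).const_sub 1).mul hasFDerivAt_fst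
  refine HasFDerivAt.prodMk (hfst.congr_fderiv ?_) hasFDerivAt_snd
  ext <;> simp [mul_comm]

lemma det_shearDeriv (c : ℝ) (p : ℝ × ℝ) : (shearDeriv c p).det = 1 - c * p.2 := by
  rw [ContinuousLinearMap.det, ← LinearMap.det_toMatrix (Module.Basis.finTwoProd ℝ)]
  simp [-LinearMap.det_toMatrix, Matrix.det_fin_two, LinearMap.toMatrix_apply,
    Module.Basis.finTwoProd, shearDeriv]

lemma injOn_shear {c : ℝ} {s : Set (ℝ × ℝ)} (hpos : ∀ p ∈ s, 0 < 1 - c * p.2) :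
    InjOn (shear c) s := by
  intro p hp q _ hpq
  simp only [shear, Prod.mk.injEq] at hpq
  obtain ⟨h1, h2⟩ := hpq
  rw [← h2] at h1
  exact Prod.ext (mul_left_cancel₀ (hpos p hp).ne' h1) h2

theorem setIntegral_image_shear {G : Type*} [NormedAddCommGroup G] [NormedSpace ℝ G]
    {c : ℝ} {s : Set (ℝ × ℝ)} (hs : MeasurableSet s) (hpos : ∀ p ∈ s, 0 < 1 - c * p.2)
    (f : ℝ × ℝ → G) :
    ∫ p in shear c '' s, f p = ∫ p in s, (1 - c * p.2) • f (shear c p) := by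
  rw [integral_image_eq_integral_abs_det_fderiv_smul volume hs
    (fun p _ => (hasFDerivAt_shear c p).hasFDerivWithinAt) (injOn_shear hpos) f]
  refine setIntegral_congr_fun hs fun p hp => ?_
  rw [det_shearDeriv, abs_of_pos (hpos p hp)]

theorem mul_setIntegral_comp_shear_le {c lam : ℝ} {s : Set (ℝ × ℝ)} (hs : IsCompact s)
    (hlam : 0 < lam) (hle : ∀ p ∈ s, lam ≤ 1 - c * p.2) {f : ℝ × ℝ → ℝ}
    (hf : ContinuousOn f (shear c '' s)) (hf0 : ∀ p, 0 ≤ f p) :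
    lam * ∫ p in s, f (shear c p) ≤ ∫ p in shear c '' s, f p := by
  have hfs : ContinuousOn (fun p => f (shear c p)) s :=
    hf.comp (continuous_shear c).continuousOn (mapsTo_image _ _)
  rw [setIntegral_image_shear hs.measurableSet (fun p hp => hlam.trans_le (hle p hp)),
    ← integral_const_mul]
  refine setIntegral_mono_on (hfs.const_smul lam |>.integrableOn_compact hs)
    ((by fun_prop : Continuous fun p : ℝ × ℝ => 1 - c * p.2).continuousOn.smul hfs
      |>.integrableOn_compact hs) hs.measurableSet fun p hp => ?_
  exact mul_le_mul_of_nonneg_right (hle p hp) (hf0 _)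

lemma ptEquiv_shear (c α β : ℝ) : ptEquiv (shear c (α, β)) = pt α 0 + β • pt (-(c * α)) 1 := by
  simp only [ptEquiv_apply, shear, pt_smul, pt_add]
  congr 1 <;> ring

lemma shear_bottom (c α : ℝ) : shear c (α, 0) = (α, 0) := by
  simp [shear]

lemma shear_top {lam a : ℝ} (ha : a ≠ 0) (α : ℝ) :
    shear ((1 - lam) / a) (α, a) = (lam * α, a) := by
  simp only [shear, Prod.mk.injEq, and_true]
  field_simp
  ring

def trapezoid (lam l a : ℝ) : Set (EuclideanSpace ℝ (Fin 2)) :=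
  convexHull ℝ {pt 0 0, pt l 0, pt 0 a, pt (lam * l) a}

lemma isCompact_trapezoid (lam l a : ℝ) : IsCompact (trapezoid lam l a) :=
  (toFinite _).isCompact_convexHull (𝕜 := ℝ)

theorem mapsTo_shear_trapezoid {lam l a : ℝ} (hl : 0 < l) (ha : 0 < a) :
    MapsTo (ptEquiv ∘ shear ((1 - lam) / a)) (Icc 0 l ×ˢ Icc 0 a) (trapezoid lam l a) := by
  rintro ⟨α, β⟩ ⟨hα, hβ⟩
  have hs : α / l ∈ Icc (0 : ℝ) 1 := ⟨div_nonneg hα.1 hl.le, (div_le_one hl).2 hα.2⟩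
  have ht : β / a ∈ Icc (0 : ℝ) 1 := ⟨div_nonneg hβ.1 ha.le, (div_le_one ha).2 hβ.2⟩
  unfold trapezoid
  convert bilinear_mem_convexHull (pt 0 0) (pt l 0) (pt 0 a) (pt (lam * l) a) hs ht using 1
  simp only [Function.comp_apply, ptEquiv_apply, shear, pt_smul, pt_add]
  congr 1 <;> field_simp <;> ring

lemma norm_shear_direction_le {lam l a α : ℝ} (hlam0 : 0 ≤ lam) (hlam1 : lam ≤ 1)
    (hα : α ∈ Icc 0 l) : ‖pt (-((1 - lam) / a * α)) 1‖ ≤ √(2 + l ^ 2 / a ^ 2) := by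
  rw [norm_pt]
  refine Real.sqrt_le_sqrt ?_
  have h : (1 - lam) * α ≤ l := (mul_le_of_le_one_left hα.1 (by linarith)).trans hα.2
  have : ((1 - lam) * α) ^ 2 / a ^ 2 ≤ l ^ 2 / a ^ 2 := by
    gcongr
    exact mul_nonneg (by linarith) hα.1
  rw [neg_sq, div_mul_eq_mul_div, div_pow]
  linarith

theorem abs_top_sub_bottom_le {lam l a α : ℝ} (hlam0 : 0 ≤ lam) (hlam1 : lam ≤ 1) (hl : 0 < l)
    (ha : 0 < a) {U : Set (EuclideanSpace ℝ (Fin 2))} (hU : IsOpen U)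
    (hCU : trapezoid lam l a ⊆ U) {u : EuclideanSpace ℝ (Fin 2) → ℝ} (hu : ContDiffOn ℝ 1 u U)
    (hα : α ∈ Icc 0 l) :
    |u (pt (lam * α) a) - u (pt α 0)| ≤
      √(2 + l ^ 2 / a ^ 2) *
        ∫ β in Icc 0 a, ‖fderiv ℝ u (ptEquiv (shear ((1 - lam) / a) (α, β)))‖ := by
  set c := (1 - lam) / a
  have htop : pt (lam * α) a = pt α 0 + a • pt (-(c * α)) 1 := by
    rw [← ptEquiv_shear, shear_top ha.ne', ptEquiv_apply]
  have hseg : ∀ t ∈ Icc 0 a, pt α 0 + t • pt (-(c * α)) 1 ∈ U := fun t ht =>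
    hCU (by rw [← ptEquiv_shear]; exact mapsTo_shear_trapezoid hl ha ⟨hα, ht⟩)
  have h := norm_sub_le_integral_norm_fderiv_segment hU hu ha.le hseg
  rw [← htop, Real.norm_eq_abs, intervalIntegral.integral_of_le ha.le,
    ← integral_Icc_eq_integral_Ioc] at h
  simp only [← ptEquiv_shear] at h
  exact h.trans (mul_le_mul_of_nonneg_right (norm_shear_direction_le hlam0 hlam1 hα)
    (setIntegral_nonneg measurableSet_Icc fun _ _ => norm_nonneg _))

theorem integral_abs_top_sub_bottom_le {lam l a : ℝ} (hlam0 : 0 ≤ lam) (hlam1 : lam ≤ 1)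
    (hl : 0 < l) (ha : 0 < a) {U : Set (EuclideanSpace ℝ (Fin 2))} (hU : IsOpen U)
    (hCU : trapezoid lam l a ⊆ U) {u : EuclideanSpace ℝ (Fin 2) → ℝ}
    (hu : ContDiffOn ℝ 1 u U) :
    ∫ α in Icc 0 l, |u (pt (lam * α) a) - u (pt α 0)| ≤
      √(2 + l ^ 2 / a ^ 2) *
        ∫ p in Icc 0 l ×ˢ Icc 0 a, ‖fderiv ℝ u (ptEquiv (shear ((1 - lam) / a) p))‖ := by
  set F := fun p => ‖fderiv ℝ u (ptEquiv (shear ((1 - lam) / a) p))‖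
  have hF : ContinuousOn F (Icc 0 l ×ˢ Icc 0 a) :=
    ((hu.continuousOn_fderiv_of_isOpen hU le_rfl).comp
      (continuous_ptEquiv.comp (continuous_shear _)).continuousOn
      fun p hp => hCU (mapsTo_shear_trapezoid hl ha hp)).norm
  have hFint : Integrable F ((volume.restrict (Icc 0 l)).prod (volume.restrict (Icc 0 a))) := by
    rw [Measure.prod_restrict, ← Measure.volume_eq_prod]
    exact hF.integrableOn_compact (isCompact_Icc.prod isCompact_Icc)
  rw [Measure.volume_eq_prod, setIntegral_prod F (by rwa [Measure.prod_restrict] at hFint),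
    ← integral_const_mul]
  refine integral_mono_of_nonneg (ae_of_all _ fun _ => abs_nonneg _)
    (hFint.integral_prod_left.const_mul _) ((ae_restrict_iff' measurableSet_Icc).2
      (ae_of_all _ fun α hα => abs_top_sub_bottom_le hlam0 hlam1 hl ha hU hCU hu hα))

theorem mul_setIntegral_shear_le_setIntegral_trapezoid {lam l a : ℝ} (hlam0 : 0 < lam)
    (hlam1 : lam ≤ 1) (hl : 0 < l) (ha : 0 < a) {U : Set (EuclideanSpace ℝ (Fin 2))}
    (hU : IsOpen U) (hCU : trapezoid lam l a ⊆ U)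
    {u : EuclideanSpace ℝ (Fin 2) → ℝ} (hu : ContDiffOn ℝ 1 u U) :
    lam * ∫ p in Icc 0 l ×ˢ Icc 0 a, ‖fderiv ℝ u (ptEquiv (shear ((1 - lam) / a) p))‖ ≤
      ∫ x in trapezoid lam l a, ‖fderiv ℝ u x‖ := by
  set C := trapezoid lam l a
  set c := (1 - lam) / a
  have hle : ∀ p ∈ Icc 0 l ×ˢ Icc 0 a, lam ≤ 1 - c * p.2 := fun p hp => by
    have : c * p.2 ≤ c * a := mul_le_mul_of_nonneg_left hp.2.2 (div_nonneg (by linarith) ha.le)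
    rw [div_mul_cancel₀ _ ha.ne'] at this
    linarith
  have hsub : shear c '' (Icc 0 l ×ˢ Icc 0 a) ⊆ ptEquiv ⁻¹' C := by
    rintro _ ⟨p, hp, rfl⟩
    exact mapsTo_shear_trapezoid hl ha hp
  have hDu : ContinuousOn (fun x => ‖fderiv ℝ u x‖) C :=
    (hu.continuousOn_fderiv_of_isOpen hU le_rfl).norm.mono hCU
  have hDu_int : IntegrableOn (fun x => ‖fderiv ℝ u x‖) C :=
    hDu.integrableOn_compact (isCompact_trapezoid lam l a)
  calc lam * ∫ p in Icc 0 l ×ˢ Icc 0 a, ‖fderiv ℝ u (ptEquiv (shear c p))‖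
      ≤ ∫ p in shear c '' (Icc 0 l ×ˢ Icc 0 a), ‖fderiv ℝ u (ptEquiv p)‖ :=
        mul_setIntegral_comp_shear_le (isCompact_Icc.prod isCompact_Icc) hlam0 hle
          (hDu.comp continuous_ptEquiv.continuousOn hsub) fun _ => norm_nonneg _
    _ ≤ ∫ p in ptEquiv ⁻¹' C, ‖fderiv ℝ u (ptEquiv p)‖ :=
        setIntegral_mono_set
          ((measurePreserving_ptEquiv.integrableOn_comp_preimage
            ptEquiv.measurableEmbedding).2 hDu_int)
          (ae_of_all _ fun _ => norm_nonneg _) hsub.eventuallyLE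
    _ = ∫ x in C, ‖fderiv ℝ u x‖ :=
        measurePreserving_ptEquiv.setIntegral_preimage_emb ptEquiv.measurableEmbedding
          (fun x => ‖fderiv ℝ u x‖) C

/-- Rescaling estimate: for `0 < λ < 1`, `l > 0`, `a > 0`, `C` the closed trapezoid with
vertices `(0,0), (l,0), (0,a), (λl,a)`, and `u` of class `C¹` on a neighborhood of `C`:
`|(1/λ)∫_0^{λl} u(x,a) dx − ∫_0^l u(x,0) dx| ≤ (√(2 + l²/a²)/λ²) ∫_C |∇u|`. -/
theorem rescaling_estimate (lam l a : ℝ) (hlam0 : 0 < lam) (hlam1 : lam < 1)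
    (hl : 0 < l) (ha : 0 < a)
    (C : Set (EuclideanSpace ℝ (Fin 2)))
    (hC : C = convexHull ℝ {pt 0 0, pt l 0, pt 0 a, pt (lam * l) a})
    (U : Set (EuclideanSpace ℝ (Fin 2))) (hU : IsOpen U) (hCU : C ⊆ U)
    (u : EuclideanSpace ℝ (Fin 2) → ℝ) (hu : ContDiffOn ℝ 1 u U) :
    |(1 / lam) * (∫ x in (0:ℝ)..(lam * l), u (pt x a)) - ∫ x in (0:ℝ)..l, u (pt x 0)|
      ≤ (Real.sqrt (2 + l ^ 2 / a ^ 2) / lam ^ 2) * ∫ p in C, ‖fderiv ℝ u p‖ := by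
  change C = trapezoid lam l a at hC
  subst hC
  have hside : ∀ β ∈ Icc 0 a,
      ContinuousOn (fun α => u (ptEquiv (shear ((1 - lam) / a) (α, β)))) (Icc 0 l) :=
    fun β hβ => hu.continuousOn.comp (by fun_prop)
      fun α hα => hCU (mapsTo_shear_trapezoid hl ha ⟨hα, hβ⟩)
  have htop := hside a ⟨ha.le, le_rfl⟩
  have hbot := hside 0 ⟨le_rfl, ha.le⟩
  simp only [shear_top ha.ne', shear_bottom, ptEquiv_apply] at htop hbot
  set K := √(2 + l ^ 2 / a ^ 2)
  set I := ∫ p in trapezoid lam l a, ‖fderiv ℝ u p‖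
  calc _ ≤ ∫ α in Icc 0 l, |u (pt (lam * α) a) - u (pt α 0)| :=
        abs_inv_mul_integral_sub_integral_le hlam0 hl.le htop hbot
    _ ≤ K * ∫ p in Icc 0 l ×ˢ Icc 0 a, ‖fderiv ℝ u (ptEquiv (shear ((1 - lam) / a) p))‖ :=
        integral_abs_top_sub_bottom_le hlam0.le hlam1.le hl ha hU hCU hu
    _ ≤ K * (I / lam) := by
        gcongr
        exact (le_div_iff₀' hlam0).2
          (mul_setIntegral_shear_le_setIntegral_trapezoid hlam0 hlam1.le hl ha hU hCU hu)
    _ ≤ K / lam ^ 2 * I := by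
        have hI : 0 ≤ I := setIntegral_nonneg
          (isCompact_trapezoid lam l a).isClosed.measurableSet fun _ _ => norm_nonneg _
        rw [mul_div_assoc', div_mul_eq_mul_div]
        exact div_le_div_of_nonneg_left (by positivity) (by positivity) (by nlinarith)
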